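/- For n ≥ 4, Γⁿ is a complete set of 𝒮†₁(Pⁿ)-formulas: for every 𝒮†₁-formula φ over the atoms p₀,…,p_{2n−1}, q₀,…,q_{2n+1}, either φ ∈ Γⁿ or φ̄ ∈ Γⁿ. Moreover, Γⁿ contains no absurdity ∃_{>i}(p, p̄). -/

import Mathlib

/-- Literals over a set of atoms `P`: an atom or a negated atom. -/
inductive Lit (P : Type) : Type
  | pos (p : P)
  | neg (p : P)
deriving DecidableEq

/-- Formulas of the (extended) numerical syllogistic: `∃_{≤ i}(ℓ,m)` and `∃_{> i}(ℓ,m)`. -/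
inductive Fm (P : Type) : Type
  | le (i : ℕ) (l m : Lit P)
  | gt (i : ℕ) (l m : Lit P)
deriving DecidableEq

/-- Interpretation of a literal in a structure with domain `A` given by `I`. -/
def Lit.interp {P A : Type} (I : P → Set A) : Lit P → Set A
  | .pos p => I p
  | .neg p => (I p)ᶜ

/-- Truth of a formula in a structure: cardinality constraints on `ℓ^𝔄 ∩ m^𝔄`. -/
def Fm.sat {P A : Type} (I : P → Set A) : Fm P → Prop
  | .le i l m => Cardinal.mk ↥(l.interp I ∩ m.interp I) ≤ (i : Cardinal)
  | .gt i l m => (i : Cardinal) < Cardinal.mk ↥(l.interp I ∩ m.interp I)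

/-- Semantic entailment: every structure (nonempty domain) satisfying `Θ` satisfies `ψ`. -/
def Entails {P : Type} (Θ : Set (Fm P)) (ψ : Fm P) : Prop :=
  ∀ (A : Type) (_ : Nonempty A) (I : P → Set A), (∀ φ ∈ Θ, φ.sat I) → ψ.sat I

/-- The negation map, swapping `∃_{≤ i}` and `∃_{> i}`. -/
def Fm.negate {P : Type} : Fm P → Fm P
  | .le i l m => .gt i l m
  | .gt i l m => .le i l m

/-- Swap the (unordered) arguments of a formula. -/
def Fm.swap {P : Type} : Fm P → Fm P
  | .le i l m => .le i m l
  | .gt i l m => .gt i m l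

/-- The numerical index of a formula. -/
def Fm.idx {P : Type} : Fm P → ℕ
  | .le i _ _ => i
  | .gt i _ _ => i

/-- The atom of a literal. -/
def Lit.atom {P : Type} : Lit P → P
  | .pos p => p
  | .neg p => p

/-- The two (unordered) literal arguments of a formula. -/
def Fm.args {P : Type} : Fm P → Lit P × Lit P
  | .le _ l m => (l, m)
  | .gt _ l m => (l, m)

/-- All atoms of a formula lie in `S`. -/
def Fm.atomsIn {P : Type} (S : Set P) (φ : Fm P) : Prop :=
  φ.args.1.atom ∈ S ∧ φ.args.2.atom ∈ S

/-- Applying a substitution to a literal. -/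
def Lit.map {P : Type} (g : P → P) : Lit P → Lit P
  | .pos p => .pos (g p)
  | .neg p => .neg (g p)

/-- Applying a substitution to a formula. -/
def Fm.map {P : Type} (g : P → P) : Fm P → Fm P
  | .le i l m => .le i (l.map g) (m.map g)
  | .gt i l m => .gt i (l.map g) (m.map g)

/-- A syllogistic rule: a finite set of antecedents and a consequent. -/
structure Rule (P : Type) where
  ants : Finset (Fm P)
  con : Fm P

/-- The direct syllogistic derivation relation `⊢_X`. -/
inductive Derives {P : Type} (X : Set (Rule P)) : Set (Fm P) → Fm P → Prop
  | prem {Θ : Set (Fm P)} {θ : Fm P} : θ ∈ Θ → Derives X Θ θ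
  | rule {Θ : Set (Fm P)} (r : Rule P) (g : P → P) : r ∈ X →
      (∀ ψ ∈ r.ants, Derives X Θ (ψ.map g)) → Derives X Θ (r.con.map g)

/-- The indirect syllogistic derivation relation `⊩_X` (with reductio ad absurdum). -/
inductive IndDerives {P : Type} (X : Set (Rule P)) : Set (Fm P) → Fm P → Prop
  | prem {Θ : Set (Fm P)} {θ : Fm P} : θ ∈ Θ → IndDerives X Θ θ
  | rule {Θ : Set (Fm P)} (r : Rule P) (g : P → P) : r ∈ X →
      (∀ ψ ∈ r.ants, IndDerives X Θ (ψ.map g)) → IndDerives X Θ (r.con.map g)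
  | raa {Θ : Set (Fm P)} {θ : Fm P} (i : ℕ) (p : P) :
      IndDerives X (insert θ Θ) (Fm.gt i (Lit.pos p) (Lit.neg p)) →
      IndDerives X Θ θ.negate
/-- Atoms `p₀,…` (left) and `q₀,…` (right). -/
abbrev SAtom : Type := Sum ℕ ℕ

def pL (i : ℕ) : Lit SAtom := Lit.pos (Sum.inl i)
def pN (i : ℕ) : Lit SAtom := Lit.neg (Sum.inl i)
def qL (j : ℕ) : Lit SAtom := Lit.pos (Sum.inr j)
def qN (j : ℕ) : Lit SAtom := Lit.neg (Sum.inr j)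

/-- Membership in the set `Γⁿ` of `𝒮†₁`-formulas (groups (3)–(19) of the paper);
formulas are identified up to the order of their arguments via `symm`. -/
inductive GammaMem (n : ℕ) : Fm SAtom → Prop
  -- (3): ∃*_{=1}(p_i, p_{i+1}), 0 ≤ i ≤ 2n−2
  | pp1a {i : ℕ} : i ≤ 2*n-2 → GammaMem n (.gt 0 (pL i) (pL (i+1)))
  | pp1b {i : ℕ} : i ≤ 2*n-2 → GammaMem n (.le 1 (pL i) (pL (i+1)))
  -- (4): ∃*_{=1}(p_i, p_{i+3}), i even, 0 ≤ i ≤ 2n−4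
  | pp2a {i : ℕ} : Even i → i ≤ 2*n-4 → GammaMem n (.gt 0 (pL i) (pL (i+3)))
  | pp2b {i : ℕ} : Even i → i ≤ 2*n-4 → GammaMem n (.le 1 (pL i) (pL (i+3)))
  -- (5): ∃*_{≤0}(p₀, p_{2n−1})
  | pp3a : GammaMem n (.le 0 (pL 0) (pL (2*n-1)))
  | pp3b : GammaMem n (.le 1 (pL 0) (pL (2*n-1)))
  -- (6): ∃*_{>1}(p_i, p_j)
  | pp4a {i j : ℕ} : i ≤ j → j ≤ 2*n-1 → j ≠ i+1 → (Odd i ∨ j ≠ i+3) →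
      (i ≠ 0 ∨ j ≠ 2*n-1) → GammaMem n (.gt 0 (pL i) (pL j))
  | pp4b {i j : ℕ} : i ≤ j → j ≤ 2*n-1 → j ≠ i+1 → (Odd i ∨ j ≠ i+3) →
      (i ≠ 0 ∨ j ≠ 2*n-1) → GammaMem n (.gt 1 (pL i) (pL j))
  -- (7): ∃*_{≤0}(p_i, p̄_i)
  | pp5a {i : ℕ} : i ≤ 2*n-1 → GammaMem n (.le 0 (pL i) (pN i))
  | pp5b {i : ℕ} : i ≤ 2*n-1 → GammaMem n (.le 1 (pL i) (pN i))
  -- (8): ∃*_{>1}(p_i, p̄_j), i ≠ j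
  | pp6a {i j : ℕ} : i ≤ 2*n-1 → j ≤ 2*n-1 → i ≠ j → GammaMem n (.gt 0 (pL i) (pN j))
  | pp6b {i j : ℕ} : i ≤ 2*n-1 → j ≤ 2*n-1 → i ≠ j → GammaMem n (.gt 1 (pL i) (pN j))
  -- (9): ∃*_{>1}(p̄_i, p̄_j)
  | pp7a {i j : ℕ} : i ≤ j → j ≤ 2*n-1 → GammaMem n (.gt 0 (pN i) (pN j))
  | pp7b {i j : ℕ} : i ≤ j → j ≤ 2*n-1 → GammaMem n (.gt 1 (pN i) (pN j))
  -- (10): ∃*_{=1}(q_i, q_{i+1}), i even, 0 ≤ i ≤ 2n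
  | qq1a {i : ℕ} : Even i → i ≤ 2*n → GammaMem n (.gt 0 (qL i) (qL (i+1)))
  | qq1b {i : ℕ} : Even i → i ≤ 2*n → GammaMem n (.le 1 (qL i) (qL (i+1)))
  -- (11): ∃*_{>1}(q_i, q_j)
  | qq2a {i j : ℕ} : i ≤ j → j ≤ 2*n+1 → (Odd i ∨ j ≠ i+1) → GammaMem n (.gt 0 (qL i) (qL j))
  | qq2b {i j : ℕ} : i ≤ j → j ≤ 2*n+1 → (Odd i ∨ j ≠ i+1) → GammaMem n (.gt 1 (qL i) (qL j))
  -- (12): ∃*_{≤0}(q_i, q̄_i)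
  | qq3a {i : ℕ} : i ≤ 2*n+1 → GammaMem n (.le 0 (qL i) (qN i))
  | qq3b {i : ℕ} : i ≤ 2*n+1 → GammaMem n (.le 1 (qL i) (qN i))
  -- (13): ∃*_{>1}(q_i, q̄_j), i ≠ j
  | qq4a {i j : ℕ} : i ≤ 2*n+1 → j ≤ 2*n+1 → i ≠ j → GammaMem n (.gt 0 (qL i) (qN j))
  | qq4b {i j : ℕ} : i ≤ 2*n+1 → j ≤ 2*n+1 → i ≠ j → GammaMem n (.gt 1 (qL i) (qN j))
  -- (14): ∃*_{>1}(q̄_i, q̄_j)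
  | qq5a {i j : ℕ} : i ≤ j → j ≤ 2*n+1 → GammaMem n (.gt 0 (qN i) (qN j))
  | qq5b {i j : ℕ} : i ≤ j → j ≤ 2*n+1 → GammaMem n (.gt 1 (qN i) (qN j))
  -- (15): ∃*_{=1}(p_{i+1}, q_i), i even, 0 ≤ i ≤ 2n−2
  | pq1a {i : ℕ} : Even i → i ≤ 2*n-2 → GammaMem n (.gt 0 (pL (i+1)) (qL i))
  | pq1b {i : ℕ} : Even i → i ≤ 2*n-2 → GammaMem n (.le 1 (pL (i+1)) (qL i))
  -- (16): ∃*_{=1}(p_i, q_{i+1}), 0 ≤ i ≤ 2n−1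
  | pq2a {i : ℕ} : i ≤ 2*n-1 → GammaMem n (.gt 0 (pL i) (qL (i+1)))
  | pq2b {i : ℕ} : i ≤ 2*n-1 → GammaMem n (.le 1 (pL i) (qL (i+1)))
  -- (17): ∃*_{=1}(p_i, q_{i+3}), i even, 0 ≤ i ≤ 2n−2
  | pq3a {i : ℕ} : Even i → i ≤ 2*n-2 → GammaMem n (.gt 0 (pL i) (qL (i+3)))
  | pq3b {i : ℕ} : Even i → i ≤ 2*n-2 → GammaMem n (.le 1 (pL i) (qL (i+3)))
  -- (18): ∃*_{>1}(p_i, q_j)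
  | pq4a {i j : ℕ} : i ≤ 2*n-1 → j ≤ 2*n+1 → j ≠ i+1 → (Odd i ∨ j ≠ i+3) →
      (Odd j ∨ i ≠ j+1) → GammaMem n (.gt 0 (pL i) (qL j))
  | pq4b {i j : ℕ} : i ≤ 2*n-1 → j ≤ 2*n+1 → j ≠ i+1 → (Odd i ∨ j ≠ i+3) →
      (Odd j ∨ i ≠ j+1) → GammaMem n (.gt 1 (pL i) (qL j))
  -- (19): ∃*_{≤0}(p_i, q̄_i)
  | pq5a {i : ℕ} : i ≤ 2*n-1 → GammaMem n (.le 0 (pL i) (qN i))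
  | pq5b {i : ℕ} : i ≤ 2*n-1 → GammaMem n (.le 1 (pL i) (qN i))
  -- (20): ∃*_{≤0}(p_i, q̄_{i+2})
  | pq6a {i : ℕ} : i ≤ 2*n-1 → GammaMem n (.le 0 (pL i) (qN (i+2)))
  | pq6b {i : ℕ} : i ≤ 2*n-1 → GammaMem n (.le 1 (pL i) (qN (i+2)))
  -- (21): ∃*_{>1}(p_i, q̄_j), j ≠ i, j ≠ i+2
  | pq7a {i j : ℕ} : i ≤ 2*n-1 → j ≤ 2*n+1 → j ≠ i → j ≠ i+2 → GammaMem n (.gt 0 (pL i) (qN j))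
  | pq7b {i j : ℕ} : i ≤ 2*n-1 → j ≤ 2*n+1 → j ≠ i → j ≠ i+2 → GammaMem n (.gt 1 (pL i) (qN j))
  -- (22): ∃*_{>1}(p̄_i, q_j)
  | pq8a {i j : ℕ} : i ≤ 2*n-1 → j ≤ 2*n+1 → GammaMem n (.gt 0 (pN i) (qL j))
  | pq8b {i j : ℕ} : i ≤ 2*n-1 → j ≤ 2*n+1 → GammaMem n (.gt 1 (pN i) (qL j))
  -- (23): ∃*_{>1}(p̄_i, q̄_j)
  | pq9a {i j : ℕ} : i ≤ 2*n-1 → j ≤ 2*n+1 → GammaMem n (.gt 0 (pN i) (qN j))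
  | pq9b {i j : ℕ} : i ≤ 2*n-1 → j ≤ 2*n+1 → GammaMem n (.gt 1 (pN i) (qN j))
  -- arguments of formulas are unordered
  | symm {φ : Fm SAtom} : GammaMem n φ → GammaMem n φ.swap

/-- The set `Γⁿ`. -/
def Gamma (n : ℕ) : Set (Fm SAtom) := { φ | GammaMem n φ }

/-- The formulas removed from `Γⁿ` to form `Γⁿ_t` (both argument orders). -/
def GammaRem (t : ℕ) : Set (Fm SAtom) :=
  {Fm.gt 0 (pL (2*t-1)) (pL (2*t)), Fm.gt 0 (pL (2*t)) (pL (2*t-1)),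
   Fm.gt 0 (pL (2*t-2)) (pL (2*t+1)), Fm.gt 0 (pL (2*t+1)) (pL (2*t-2)),
   Fm.le 1 (qL (2*t)) (qL (2*t+1)), Fm.le 1 (qL (2*t+1)) (qL (2*t))}

/-- The formulas added to form `Γⁿ_t` (both argument orders). -/
def GammaAdd (t : ℕ) : Set (Fm SAtom) :=
  {Fm.le 0 (pL (2*t-1)) (pL (2*t)), Fm.le 0 (pL (2*t)) (pL (2*t-1)),
   Fm.le 0 (pL (2*t-2)) (pL (2*t+1)), Fm.le 0 (pL (2*t+1)) (pL (2*t-2)),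
   Fm.gt 1 (qL (2*t)) (qL (2*t+1)), Fm.gt 1 (qL (2*t+1)) (qL (2*t))}

/-- The satisfiable variant `Γⁿ_t`. -/
def GammaT (n t : ℕ) : Set (Fm SAtom) := (Gamma n \ GammaRem t) ∪ GammaAdd t
/-- A literal over the atoms `p₀,…,p_{2n−1}, q₀,…,q_{2n+1}`. -/
def goodLit (n : ℕ) (l : Lit SAtom) : Prop :=
  match l.atom with
  | Sum.inl i => i ≤ 2*n-1
  | Sum.inr j => j ≤ 2*n+1

/-!
Completeness is a case analysis on the two argument literals. Up to argument order there are ten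
patterns (p p, p p̄, p̄ p̄, q q, q q̄, q̄ q̄, p q, p q̄, p̄ q, p̄ q̄), and for each of them the index
conditions of the corresponding groups of `Γⁿ` are exhaustive, so at index `0` and `1` one of
`∃_{≤k}(ℓ,m)`, `∃_{>k}(ℓ,m)` is listed. Consistency: the only formulas `∃_{>k}(ℓ,m̄)` with complementary
literals in `Γⁿ` have distinct atoms, and closing under argument swap preserves this.
-/

def Decides {P : Type} (Γ : Set (Fm P)) (k : ℕ) (l m : Lit P) : Prop :=
  Fm.le k l m ∈ Γ ∨ Fm.gt k l m ∈ Γ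

@[simp]
lemma Fm.swap_swap {P : Type} (φ : Fm P) : φ.swap.swap = φ := by
  cases φ <;> rfl

lemma Decides.symm {P : Type} {Γ : Set (Fm P)} (hΓ : ∀ φ ∈ Γ, φ.swap ∈ Γ) {k : ℕ}
    {l m : Lit P} (h : Decides Γ k m l) : Decides Γ k l m :=
  h.imp (hΓ _) (hΓ _)

lemma Nat.odd_or_not_of_not_even_and {i : ℕ} {q : Prop} (h : ¬(Even i ∧ q)) : Odd i ∨ ¬q := by
  rwa [not_and_or, Nat.not_even_iff_odd] at h

namespace Gamma

variable {n k i j : ℕ}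

lemma swap_mem : ∀ φ ∈ Gamma n, φ.swap ∈ Gamma n :=
  fun _ => GammaMem.symm

lemma decides_pL_pL_of_le (hij : i ≤ j) (hj : j ≤ 2*n-1) (hk : k ≤ 1) :
    Decides (Gamma n) k (pL i) (pL j) := by
  by_cases h₁ : j = i + 1
  · subst h₁
    interval_cases k
    · exact .inr (.pp1a (by omega))
    · exact .inl (.pp1b (by omega))
  by_cases h₃ : Even i ∧ j = i + 3
  · obtain ⟨hi, rfl⟩ := h₃
    interval_cases k
    · exact .inr (.pp2a hi (by omega))
    · exact .inl (.pp2b hi (by omega))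
  by_cases hlast : i = 0 ∧ j = 2*n-1
  · obtain ⟨rfl, rfl⟩ := hlast
    interval_cases k
    · exact .inl .pp3a
    · exact .inl .pp3b
  have h₃' := Nat.odd_or_not_of_not_even_and h₃
  have hlast' : i ≠ 0 ∨ j ≠ 2*n-1 := not_and_or.mp hlast
  interval_cases k
  · exact .inr (.pp4a hij hj h₁ h₃' hlast')
  · exact .inr (.pp4b hij hj h₁ h₃' hlast')

lemma decides_pL_pL (hi : i ≤ 2*n-1) (hj : j ≤ 2*n-1) (hk : k ≤ 1) :
    Decides (Gamma n) k (pL i) (pL j) := by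
  rcases le_total i j with hij | hji
  · exact decides_pL_pL_of_le hij hj hk
  · exact (decides_pL_pL_of_le hji hi hk).symm swap_mem

lemma decides_pL_pN (hi : i ≤ 2*n-1) (hj : j ≤ 2*n-1) (hk : k ≤ 1) :
    Decides (Gamma n) k (pL i) (pN j) := by
  by_cases hij : i = j
  · subst hij
    interval_cases k
    · exact .inl (.pp5a hi)
    · exact .inl (.pp5b hi)
  interval_cases k
  · exact .inr (.pp6a hi hj hij)
  · exact .inr (.pp6b hi hj hij)

lemma decides_pN_pN (hi : i ≤ 2*n-1) (hj : j ≤ 2*n-1) (hk : k ≤ 1) :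
    Decides (Gamma n) k (pN i) (pN j) := by
  rcases le_total i j with hij | hji
  · interval_cases k
    · exact .inr (.pp7a hij hj)
    · exact .inr (.pp7b hij hj)
  · refine Decides.symm swap_mem ?_
    interval_cases k
    · exact .inr (.pp7a hji hi)
    · exact .inr (.pp7b hji hi)

lemma decides_qL_qL_of_le (hij : i ≤ j) (hj : j ≤ 2*n+1) (hk : k ≤ 1) :
    Decides (Gamma n) k (qL i) (qL j) := by
  by_cases h₁ : Even i ∧ j = i + 1
  · obtain ⟨hi, rfl⟩ := h₁
    interval_cases k
    · exact .inr (.qq1a hi (by omega))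
    · exact .inl (.qq1b hi (by omega))
  have h₁' := Nat.odd_or_not_of_not_even_and h₁
  interval_cases k
  · exact .inr (.qq2a hij hj h₁')
  · exact .inr (.qq2b hij hj h₁')

lemma decides_qL_qL (hi : i ≤ 2*n+1) (hj : j ≤ 2*n+1) (hk : k ≤ 1) :
    Decides (Gamma n) k (qL i) (qL j) := by
  rcases le_total i j with hij | hji
  · exact decides_qL_qL_of_le hij hj hk
  · exact (decides_qL_qL_of_le hji hi hk).symm swap_mem

lemma decides_qL_qN (hi : i ≤ 2*n+1) (hj : j ≤ 2*n+1) (hk : k ≤ 1) :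
    Decides (Gamma n) k (qL i) (qN j) := by
  by_cases hij : i = j
  · subst hij
    interval_cases k
    · exact .inl (.qq3a hi)
    · exact .inl (.qq3b hi)
  interval_cases k
  · exact .inr (.qq4a hi hj hij)
  · exact .inr (.qq4b hi hj hij)

lemma decides_qN_qN (hi : i ≤ 2*n+1) (hj : j ≤ 2*n+1) (hk : k ≤ 1) :
    Decides (Gamma n) k (qN i) (qN j) := by
  rcases le_total i j with hij | hji
  · interval_cases k
    · exact .inr (.qq5a hij hj)
    · exact .inr (.qq5b hij hj)
  · refine Decides.symm swap_mem ?_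
    interval_cases k
    · exact .inr (.qq5a hji hi)
    · exact .inr (.qq5b hji hi)

lemma decides_pL_qL (hi : i ≤ 2*n-1) (hj : j ≤ 2*n+1) (hk : k ≤ 1) :
    Decides (Gamma n) k (pL i) (qL j) := by
  by_cases hback : Even j ∧ i = j + 1
  · obtain ⟨hj, rfl⟩ := hback
    interval_cases k
    · exact .inr (.pq1a hj (by omega))
    · exact .inl (.pq1b hj (by omega))
  by_cases h₁ : j = i + 1
  · subst h₁
    interval_cases k
    · exact .inr (.pq2a hi)
    · exact .inl (.pq2b hi)
  by_cases h₃ : Even i ∧ j = i + 3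
  · obtain ⟨hi, rfl⟩ := h₃
    interval_cases k
    · exact .inr (.pq3a hi (by omega))
    · exact .inl (.pq3b hi (by omega))
  have h₃' := Nat.odd_or_not_of_not_even_and h₃
  have hback' := Nat.odd_or_not_of_not_even_and hback
  interval_cases k
  · exact .inr (.pq4a hi hj h₁ h₃' hback')
  · exact .inr (.pq4b hi hj h₁ h₃' hback')

lemma decides_pL_qN (hi : i ≤ 2*n-1) (hj : j ≤ 2*n+1) (hk : k ≤ 1) :
    Decides (Gamma n) k (pL i) (qN j) := by
  by_cases h₀ : j = i
  · subst h₀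
    interval_cases k
    · exact .inl (.pq5a hi)
    · exact .inl (.pq5b hi)
  by_cases h₂ : j = i + 2
  · subst h₂
    interval_cases k
    · exact .inl (.pq6a hi)
    · exact .inl (.pq6b hi)
  interval_cases k
  · exact .inr (.pq7a hi hj h₀ h₂)
  · exact .inr (.pq7b hi hj h₀ h₂)

lemma decides_pN_qL (hi : i ≤ 2*n-1) (hj : j ≤ 2*n+1) (hk : k ≤ 1) :
    Decides (Gamma n) k (pN i) (qL j) := by
  interval_cases k
  · exact .inr (.pq8a hi hj)
  · exact .inr (.pq8b hi hj)

lemma decides_pN_qN (hi : i ≤ 2*n-1) (hj : j ≤ 2*n+1) (hk : k ≤ 1) :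
    Decides (Gamma n) k (pN i) (qN j) := by
  interval_cases k
  · exact .inr (.pq9a hi hj)
  · exact .inr (.pq9b hi hj)

lemma decides_of_goodLit (hk : k ≤ 1) {l m : Lit SAtom} (hl : goodLit n l)
    (hm : goodLit n m) : Decides (Gamma n) k l m := by
  rcases l with (a | a) | (a | a) <;> rcases m with (b | b) | (b | b) <;>
    simp only [goodLit, Lit.atom] at hl hm
  · exact decides_pL_pL hl hm hk
  · exact decides_pL_qL hl hm hk
  · exact decides_pL_pN hl hm hk
  · exact decides_pL_qN hl hm hk
  · exact (decides_pL_qL hm hl hk).symm swap_mem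
  · exact decides_qL_qL hl hm hk
  · exact (decides_pN_qL hm hl hk).symm swap_mem
  · exact decides_qL_qN hl hm hk
  · exact (decides_pL_pN hm hl hk).symm swap_mem
  · exact decides_pN_qL hl hm hk
  · exact decides_pN_pN hl hm hk
  · exact decides_pN_qN hl hm hk
  · exact (decides_pL_qN hm hl hk).symm swap_mem
  · exact (decides_qL_qN hm hl hk).symm swap_mem
  · exact (decides_pN_qN hm hl hk).symm swap_mem
  · exact decides_qN_qN hl hm hk

lemma ne_gt_pos_neg_of_mem {i : ℕ} {p : SAtom} {φ : Fm SAtom} (h : φ ∈ Gamma n) :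
    φ ≠ .gt i (.pos p) (.neg p) ∧ φ.swap ≠ .gt i (.pos p) (.neg p) := by
  induction h with
  | symm _ ih => rw [Fm.swap_swap]; exact ih.symm
  | _ => grind [Fm.swap, pL, pN, qL, qN]

end Gamma

theorem gamma_complete_and_consistent_general (n : ℕ) :
    (∀ φ : Fm SAtom, φ.idx ≤ 1 → goodLit n φ.args.1 → goodLit n φ.args.2 →
        φ ∈ Gamma n ∨ φ.negate ∈ Gamma n) ∧
    (∀ (i : ℕ) (p : SAtom), Fm.gt i (Lit.pos p) (Lit.neg p) ∉ Gamma n) := by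
  refine ⟨fun φ hk hl hm => ?_, fun i p h => (Gamma.ne_gt_pos_neg_of_mem h).1 rfl⟩
  cases φ with
  | le k l m => exact Gamma.decides_of_goodLit hk hl hm
  | gt k l m => exact Or.symm (Gamma.decides_of_goodLit hk hl hm)

/-- for `n ≥ 4`, `Γⁿ` is a complete set of `𝒮†₁(Pⁿ)`-formulas, and
contains no absurdity. -/
theorem gamma_complete_and_consistent (n : ℕ) (hn : 4 ≤ n) :
    (∀ φ : Fm SAtom, φ.idx ≤ 1 → goodLit n φ.args.1 → goodLit n φ.args.2 →
        φ ∈ Gamma n ∨ φ.negate ∈ Gamma n) ∧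
    (∀ (i : ℕ) (p : SAtom), Fm.gt i (Lit.pos p) (Lit.neg p) ∉ Gamma n) :=
  gamma_complete_and_consistent_general n
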